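/- Let d ≥ 5 and let p ≥ d be prime. The only γ ∈ GL(2,ℚ) with L∘γ = L, where L(X,Y) = (X − pY)·∏_{n=0}^{d−2}(X − nY), are γ = Id if d is odd, and γ = ±Id if d is even. -/

import Mathlib

/-!
Write `x₀ < x₁ < ⋯ < x_{d-1}` for the roots `0, 1, …, d - 2, p` of `L(X, 1)`, indexed by
`ZMod d`. If `L ∘ γ = L`, the Möbius map `s ↦ (a s + b) / (c s + e)` of `γ` permutes the
roots. It preserves or reverses the cyclic order of `ℙ¹(ℚ)`, according to the sign of `det γ`,
so it acts on the indices as `i ↦ k + i` or `i ↦ k - i`; it also preserves cross-ratios. The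
cross-ratio of four consecutive roots `xᵢ, …, xᵢ₊₃` is `1/4` exactly for the `d - 4` windows
avoiding `p`, which rules out every rotation but the identity and every reflection. Hence `γ`
fixes `0, 1, 2`, so it is a scalar `λ` with `λ ^ d = 1`.
-/

section CyclicOrder

section Ring

variable {K : Type*} [CommRing K]

/-- Over an ordered field, `0 < cyclicOrient x y z` says that `x, y, z` are distinct and met in
this order when running around `ℙ¹` in the positive direction. -/
def cyclicOrient (x y z : K) : K := (x - y) * (y - z) * (z - x)

lemma cyclicOrient_swap (x y z : K) : cyclicOrient y x z = -cyclicOrient x y z := by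
  unfold cyclicOrient; ring

lemma cyclicOrient_rotate (x y z : K) : cyclicOrient x y z = cyclicOrient y z x := by
  unfold cyclicOrient; ring

end Ring

variable {K : Type*} [Field K] [LinearOrder K] [IsStrictOrderedRing K]

lemma cyclicOrient_pos {x y z : K} (hxy : x < y) (hyz : y < z) : 0 < cyclicOrient x y z :=
  mul_pos (mul_pos_of_neg_of_neg (by linarith) (by linarith)) (by linarith)

variable {n : ℕ}

/-- Each `x (i + 1)` is the successor of `x i` in the cyclic order of the points `x j`. -/
def CyclicallyOrdered (x : ZMod n → K) : Prop :=
  ∀ i j, j ≠ i → j ≠ i + 1 → 0 < cyclicOrient (x i) (x (i + 1)) (x j)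

lemma cyclicallyOrdered_of_lt [NeZero n] {x : ZMod n → K}
    (hx : ∀ i j : ZMod n, i.val < j.val → x i < x j) : CyclicallyOrdered x := by
  intro i j hji hji1
  have hj : j.val ≠ i.val := fun h => hji (ZMod.val_injective n h)
  rcases Nat.lt_or_ge (i.val + 1) n with hi | hi
  · have h1 : (1 : ZMod n).val = 1 := ZMod.val_one'' (by omega)
    have hval : (i + 1).val = i.val + 1 := by
      rw [ZMod.val_add_of_lt (by rw [h1]; omega), h1]
    have hj1 : j.val ≠ i.val + 1 := fun h => hji1 (ZMod.val_injective n (h.trans hval.symm))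
    rcases Nat.lt_or_gt_of_ne hj with hlt | hgt
    · rw [cyclicOrient_rotate, cyclicOrient_rotate]
      exact cyclicOrient_pos (hx _ _ hlt) (hx _ _ (by omega))
    · exact cyclicOrient_pos (hx _ _ (by omega)) (hx _ _ (by omega))
  · have hi1 : i + 1 = 0 := by
      rw [← ZMod.natCast_zmod_val i, ← Nat.cast_add_one,
        show i.val + 1 = n by have := ZMod.val_lt i; omega, ZMod.natCast_self]
    rw [hi1] at hji1 ⊢
    have hj0 : j.val ≠ 0 := fun h => hji1 ((ZMod.val_eq_zero j).mp h)
    have := ZMod.val_lt j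
    rw [cyclicOrient_rotate]
    exact cyclicOrient_pos (hx _ _ (by rw [ZMod.val_zero]; omega)) (hx _ _ (by omega))

lemma CyclicallyOrdered.eq_add_one {x : ZMod n → K} (hx : CyclicallyOrdered x) {u v : ZMod n}
    (huv : u ≠ v) (h : ∀ w, w ≠ u → w ≠ v → 0 < cyclicOrient (x u) (x v) (x w)) :
    v = u + 1 := by
  by_contra hv
  have : Nontrivial (ZMod n) := ⟨⟨u, v, huv⟩⟩
  have h1 := h (u + 1) (by simp) (Ne.symm hv)
  have h2 := hx u v (Ne.symm huv) hv
  have : cyclicOrient (x u) (x v) (x (u + 1)) = -cyclicOrient (x u) (x (u + 1)) (x v) := by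
    unfold cyclicOrient; ring
  linarith

lemma CyclicallyOrdered.map_add_one {x : ZMod n → K} (hx : CyclicallyOrdered x)
    {σ : ZMod n → ZMod n} (hσ : Function.Bijective σ)
    (hpres : ∀ i j k, 0 < cyclicOrient (x i) (x j) (x k) →
      0 < cyclicOrient (x (σ i)) (x (σ j)) (x (σ k))) (i : ZMod n) :
    σ (i + 1) = σ i + 1 := by
  rcases subsingleton_or_nontrivial (ZMod n) with _ | _
  · exact Subsingleton.elim _ _
  refine hx.eq_add_one (hσ.1.ne (by simp)) fun w hwi hwi1 => ?_
  obtain ⟨j, rfl⟩ := hσ.2 w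
  exact hpres _ _ _ (hx i j (fun h => hwi (h ▸ rfl)) (fun h => hwi1 (h ▸ rfl)))

lemma CyclicallyOrdered.map_add_one_of_reverse {x : ZMod n → K} (hx : CyclicallyOrdered x)
    {σ : ZMod n → ZMod n} (hσ : Function.Bijective σ)
    (hrev : ∀ i j k, 0 < cyclicOrient (x i) (x j) (x k) →
      0 < cyclicOrient (x (σ j)) (x (σ i)) (x (σ k))) (i : ZMod n) :
    σ (i + 1) = σ i + -1 := by
  rcases subsingleton_or_nontrivial (ZMod n) with _ | _
  · exact Subsingleton.elim _ _
  rw [← sub_eq_add_neg, eq_sub_iff_add_eq]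
  refine (hx.eq_add_one (hσ.1.ne (by simp)) fun w hwi1 hwi => ?_).symm
  obtain ⟨j, rfl⟩ := hσ.2 w
  exact hrev _ _ _ (hx i j (fun h => hwi (h ▸ rfl)) (fun h => hwi1 (h ▸ rfl)))

lemma eq_add_mul_of_map_add_one [NeZero n] {σ : ZMod n → ZMod n} {ε : ZMod n}
    (h : ∀ i, σ (i + 1) = σ i + ε) (i : ZMod n) : σ i = σ 0 + ε * i := by
  suffices ∀ m : ℕ, σ m = σ 0 + ε * m by simpa using this i.val
  intro m
  induction m with
  | zero => simp
  | succ m ih => push_cast; rw [h, ih]; ring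

end CyclicOrder

section Mobius

variable {K : Type*} [Field K]

def mobius (M : Matrix (Fin 2) (Fin 2) K) (s : K) : K :=
  (M 0 0 * s + M 0 1) / (M 1 0 * s + M 1 1)

def crossRatio (x y z w : K) : K := (x - y) * (z - w) / ((x - z) * (y - w))

lemma crossRatio_reverse (x y z w : K) : crossRatio w z y x = crossRatio x y z w := by
  unfold crossRatio; ring

variable {M : Matrix (Fin 2) (Fin 2) K}

lemma mobius_sub_mobius {s t : K} (hs : M 1 0 * s + M 1 1 ≠ 0) (ht : M 1 0 * t + M 1 1 ≠ 0) :
    mobius M s - mobius M t =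
      M.det * (s - t) / ((M 1 0 * s + M 1 1) * (M 1 0 * t + M 1 1)) := by
  rw [mobius, mobius, div_sub_div _ _ hs ht, Matrix.det_fin_two]
  ring

lemma eq_of_mobius_eq {s t : K} (hdet : M.det ≠ 0) (hs : M 1 0 * s + M 1 1 ≠ 0)
    (ht : M 1 0 * t + M 1 1 ≠ 0) (h : mobius M s = mobius M t) : s = t := by
  have := mobius_sub_mobius hs ht
  rw [h, sub_self, eq_comm, div_eq_zero_iff] at this
  simpa [hdet, hs, ht, sub_eq_zero] using this

lemma crossRatio_mobius {x y z w : K} (hdet : M.det ≠ 0) (hx : M 1 0 * x + M 1 1 ≠ 0)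
    (hy : M 1 0 * y + M 1 1 ≠ 0) (hz : M 1 0 * z + M 1 1 ≠ 0) (hw : M 1 0 * w + M 1 1 ≠ 0) :
    crossRatio (mobius M x) (mobius M y) (mobius M z) (mobius M w) = crossRatio x y z w := by
  rw [crossRatio, crossRatio, mobius_sub_mobius hx hy, mobius_sub_mobius hz hw,
    mobius_sub_mobius hx hz, mobius_sub_mobius hy hw]
  generalize M 1 0 * x + M 1 1 = a at *
  generalize M 1 0 * y + M 1 1 = b at *
  generalize M 1 0 * z + M 1 1 = c at *
  generalize M 1 0 * w + M 1 1 = e at *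
  field_simp

lemma cyclicOrient_mobius {x y z : K} (hx : M 1 0 * x + M 1 1 ≠ 0)
    (hy : M 1 0 * y + M 1 1 ≠ 0) (hz : M 1 0 * z + M 1 1 ≠ 0) :
    cyclicOrient (mobius M x) (mobius M y) (mobius M z) *
        ((M 1 0 * x + M 1 1) * (M 1 0 * y + M 1 1) * (M 1 0 * z + M 1 1)) ^ 2 =
      M.det ^ 3 * cyclicOrient x y z := by
  rw [cyclicOrient, mobius_sub_mobius hx hy, mobius_sub_mobius hy hz, mobius_sub_mobius hz hx,
    cyclicOrient]
  generalize M 1 0 * x + M 1 1 = a at *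
  generalize M 1 0 * y + M 1 1 = b at *
  generalize M 1 0 * z + M 1 1 = c at *
  field_simp

lemma mobius_mem_of_prod_eq {ι : Type*} [Fintype ι] {x : ι → K} (hdet : M.det ≠ 0)
    (h : ∀ X Y : K, ∏ i, ((M 0 0 * X + M 0 1 * Y) - x i * (M 1 0 * X + M 1 1 * Y)) =
      ∏ i, (X - x i * Y)) (i : ι) :
    M 1 0 * x i + M 1 1 ≠ 0 ∧ ∃ j, mobius M (x i) = x j := by
  have hroot : ∏ j, ((M 0 0 * x i + M 0 1 * 1) - x j * (M 1 0 * x i + M 1 1 * 1)) = 0 := by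
    rw [h]
    exact Finset.prod_eq_zero (Finset.mem_univ i) (by ring)
  obtain ⟨j, -, hj⟩ := Finset.prod_eq_zero_iff.mp hroot
  have hden : M 1 0 * x i + M 1 1 ≠ 0 := by
    -- otherwise `hj` puts `(x i, 1)` in the kernel of `M`
    intro h0
    apply hdet
    rw [Matrix.det_fin_two]
    linear_combination M 0 0 * h0 - M 1 0 * (hj + x j * h0)
  refine ⟨hden, j, ?_⟩
  rw [mobius, div_eq_iff hden]
  linear_combination hj

lemma eq_smul_one_of_mobius_eq_self {s t u : K} (hst : s ≠ t) (hsu : s ≠ u) (htu : t ≠ u)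
    (hs : M 1 0 * s + M 1 1 ≠ 0) (ht : M 1 0 * t + M 1 1 ≠ 0) (hu : M 1 0 * u + M 1 1 ≠ 0)
    (hfs : mobius M s = s) (hft : mobius M t = t) (hfu : mobius M u = u) :
    M = M 0 0 • 1 := by
  rw [mobius, div_eq_iff hs] at hfs
  rw [mobius, div_eq_iff ht] at hft
  rw [mobius, div_eq_iff hu] at hfu
  have hst' : M 1 0 * (s + t) + (M 1 1 - M 0 0) = 0 :=
    (mul_eq_zero.mp (by linear_combination hft - hfs :
      (s - t) * (M 1 0 * (s + t) + (M 1 1 - M 0 0)) = 0)).resolve_left (sub_ne_zero.mpr hst)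
  have hsu' : M 1 0 * (s + u) + (M 1 1 - M 0 0) = 0 :=
    (mul_eq_zero.mp (by linear_combination hfu - hfs :
      (s - u) * (M 1 0 * (s + u) + (M 1 1 - M 0 0)) = 0)).resolve_left (sub_ne_zero.mpr hsu)
  have hc : M 1 0 = 0 :=
    (mul_eq_zero.mp (by linear_combination hst' - hsu' : (t - u) * M 1 0 = 0)).resolve_left
      (sub_ne_zero.mpr htu)
  have he : M 1 1 = M 0 0 := by linear_combination hst' - (s + t) * hc
  have hb : M 0 1 = 0 := by linear_combination hfs + s * s * hc + s * he
  ext i j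
  fin_cases i <;> fin_cases j <;> simp [hb, hc, he]

section Ordered

variable [LinearOrder K] [IsStrictOrderedRing K]

lemma cyclicOrient_mobius_pos {x y z : K} (hdet : 0 < M.det) (hx : M 1 0 * x + M 1 1 ≠ 0)
    (hy : M 1 0 * y + M 1 1 ≠ 0) (hz : M 1 0 * z + M 1 1 ≠ 0) (h : 0 < cyclicOrient x y z) :
    0 < cyclicOrient (mobius M x) (mobius M y) (mobius M z) := by
  have : 0 < M.det ^ 3 * cyclicOrient x y z := by positivity
  exact pos_of_mul_pos_left (cyclicOrient_mobius hx hy hz ▸ this) (sq_nonneg _)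

lemma cyclicOrient_mobius_neg {x y z : K} (hdet : M.det < 0) (hx : M 1 0 * x + M 1 1 ≠ 0)
    (hy : M 1 0 * y + M 1 1 ≠ 0) (hz : M 1 0 * z + M 1 1 ≠ 0) (h : 0 < cyclicOrient x y z) :
    0 < cyclicOrient (mobius M y) (mobius M x) (mobius M z) := by
  have : M.det ^ 3 * cyclicOrient x y z < 0 :=
    mul_neg_of_neg_of_pos (Odd.pow_neg (by decide) hdet) h
  rw [cyclicOrient_swap, neg_pos]
  exact neg_of_mul_neg_left (cyclicOrient_mobius hx hy hz ▸ this) (sq_nonneg _)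

end Ordered

end Mobius

section MobiusPermutation

variable {K : Type*} [Field K] {n : ℕ} {x : ZMod n → K} {M : Matrix (Fin 2) (Fin 2) K}
  {σ : ZMod n → ZMod n}

def consecutiveCrossRatio (x : ZMod n → K) (i : ZMod n) : K :=
  crossRatio (x i) (x (i + 1)) (x (i + 2)) (x (i + 3))

lemma crossRatio_comp_of_mobius (hdet : M.det ≠ 0) (hden : ∀ i, M 1 0 * x i + M 1 1 ≠ 0)
    (hσ : ∀ i, mobius M (x i) = x (σ i)) (i j k l : ZMod n) :
    crossRatio (x (σ i)) (x (σ j)) (x (σ k)) (x (σ l)) =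
      crossRatio (x i) (x j) (x k) (x l) := by
  rw [← hσ, ← hσ, ← hσ, ← hσ, crossRatio_mobius hdet (hden i) (hden j) (hden k) (hden l)]

lemma consecutiveCrossRatio_add_of_mobius (hdet : M.det ≠ 0)
    (hden : ∀ i, M 1 0 * x i + M 1 1 ≠ 0) (hσ : ∀ i, mobius M (x i) = x (σ i))
    (hrot : ∀ i, σ i = σ 0 + i) (i : ZMod n) :
    consecutiveCrossRatio x (i + σ 0) = consecutiveCrossRatio x i := by
  rw [consecutiveCrossRatio, consecutiveCrossRatio,
    ← crossRatio_comp_of_mobius hdet hden hσ i (i + 1) (i + 2) (i + 3),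
    hrot i, hrot (i + 1), hrot (i + 2), hrot (i + 3)]
  ring_nf

lemma consecutiveCrossRatio_sub_of_mobius (hdet : M.det ≠ 0)
    (hden : ∀ i, M 1 0 * x i + M 1 1 ≠ 0) (hσ : ∀ i, mobius M (x i) = x (σ i))
    (hrefl : ∀ i, σ i = σ 0 - i) (i : ZMod n) :
    consecutiveCrossRatio x (σ 0 - 3 - i) = consecutiveCrossRatio x i := by
  rw [consecutiveCrossRatio, consecutiveCrossRatio,
    ← crossRatio_comp_of_mobius hdet hden hσ i (i + 1) (i + 2) (i + 3),
    hrefl i, hrefl (i + 1), hrefl (i + 2), hrefl (i + 3), ← crossRatio_reverse]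
  ring_nf

variable [LinearOrder K] [IsStrictOrderedRing K] [NeZero n]

lemma CyclicallyOrdered.eq_add_of_mobius (hx : CyclicallyOrdered x) (hbij : Function.Bijective σ)
    (hdet : 0 < M.det) (hden : ∀ i, M 1 0 * x i + M 1 1 ≠ 0)
    (hσ : ∀ i, mobius M (x i) = x (σ i)) (i : ZMod n) : σ i = σ 0 + i := by
  have hstep := hx.map_add_one hbij fun a b c h => by
    simpa only [← hσ] using cyclicOrient_mobius_pos hdet (hden a) (hden b) (hden c) h
  simpa using eq_add_mul_of_map_add_one hstep i

lemma CyclicallyOrdered.eq_sub_of_mobius (hx : CyclicallyOrdered x) (hbij : Function.Bijective σ)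
    (hdet : M.det < 0) (hden : ∀ i, M 1 0 * x i + M 1 1 ≠ 0)
    (hσ : ∀ i, mobius M (x i) = x (σ i)) (i : ZMod n) : σ i = σ 0 - i := by
  have hstep := hx.map_add_one_of_reverse hbij fun a b c h => by
    simpa only [← hσ] using cyclicOrient_mobius_neg hdet (hden a) (hden b) (hden c) h
  rw [eq_add_mul_of_map_add_one hstep i]
  ring

end MobiusPermutation

lemma ZMod.val_neg_one_of_neZero {n : ℕ} [NeZero n] : (-1 : ZMod n).val = n - 1 := by
  obtain ⟨k, rfl⟩ : ∃ k, n = k + 1 := Nat.exists_eq_add_one.mpr (NeZero.pos n)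
  exact ZMod.val_neg_one k

section LevelSet

variable {α : Type*} {n m : ℕ} [NeZero n] {f : ZMod n → α} {v : α}

lemma eq_zero_of_forall_add_eq (hm : 0 < m) (hmn : m < n) (hf : ∀ i, f i = v ↔ i.val < m)
    {k : ZMod n} (hk : ∀ i, f (i + k) = f i) : k = 0 := by
  by_contra hk0
  have h1 : (1 : ZMod n).val = 1 := ZMod.val_one'' (by omega)
  have hkpos : 1 ≤ k.val := Nat.one_le_iff_ne_zero.mpr ((ZMod.val_eq_zero k).not.mpr hk0)
  have hstart : k.val < m := by
    rw [← hf, ← zero_add k, hk, hf, ZMod.val_zero]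
    exact hm
  have hprev : ¬ (k - 1).val < m := by
    rw [← hf, sub_eq_neg_add, hk, hf, ZMod.val_neg_one_of_neZero]
    omega
  rw [ZMod.val_sub (by rw [h1]; exact hkpos), h1] at hprev
  omega

/-- A reflection `i ↦ j - i` preserving the level set `[0, m)` swaps its ends, so `j = m - 1`. -/
lemma apply_neg_one_eq_of_forall_sub_eq (hm : 0 < m) (hmn : m < n)
    (hf : ∀ i, f i = v ↔ i.val < m)
    {j : ZMod n} (hj : ∀ i, f (j - i) = f i) : f (-1) = f m := by
  have h1 : (1 : ZMod n).val = 1 := ZMod.val_one'' (by omega)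
  have hend : j.val < m := by
    rw [← hf, ← sub_zero j, hj, hf, ZMod.val_zero]
    exact hm
  have hnext : ¬ (j + 1).val < m := by
    rw [← hf, ← sub_neg_eq_add, hj, hf, ZMod.val_neg_one_of_neZero]
    omega
  rw [ZMod.val_add_of_lt (by rw [h1]; omega), h1] at hnext
  have : j + 1 = m := by
    apply ZMod.val_injective n
    rw [ZMod.val_add_of_lt (by rw [h1]; omega), h1, ZMod.val_natCast_of_lt hmn]
    omega
  rw [← this, ← sub_neg_eq_add, hj]

end LevelSet

/-- The roots `0, 1, …, n - 2, p` of `L(X, 1)`, in increasing order. -/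
def rootPoint (p : ℕ) {n : ℕ} (i : ZMod n) : ℚ := if i.val + 1 < n then i.val else p

section RootPoint

variable {p n : ℕ}

lemma rootPoint_natCast {k : ℕ} (hk : k + 1 < n) : rootPoint p (k : ZMod n) = k := by
  rw [rootPoint, ZMod.val_natCast_of_lt (by omega), if_pos hk]

lemma rootPoint_neg_one [NeZero n] : rootPoint p (-1 : ZMod n) = p := by
  rw [rootPoint, ZMod.val_neg_one_of_neZero, if_neg (by omega)]

lemma rootPoint_neg_natCast {k : ℕ} (hk1 : 2 ≤ k) (hkn : k ≤ n) :
    rootPoint p (-(k : ZMod n)) = n - k := by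
  have : -(k : ZMod n) = ((n - k : ℕ) : ZMod n) := by
    rw [Nat.cast_sub hkn, ZMod.natCast_self, zero_sub]
  rw [this, rootPoint_natCast (by omega), Nat.cast_sub hkn]

variable [NeZero n]

lemma rootPoint_lt_rootPoint (hp : n ≤ p + 1) {i j : ZMod n} (hij : i.val < j.val) :
    rootPoint p i < rootPoint p j := by
  have hj := ZMod.val_lt j
  rw [rootPoint, rootPoint, if_pos (by omega)]
  split_ifs with h
  · exact_mod_cast hij
  · exact_mod_cast (by omega : i.val < p)

lemma rootPoint_injective (hp : n ≤ p + 1) :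
    Function.Injective (rootPoint p : ZMod n → ℚ) := by
  intro i j hij
  by_contra hne
  rcases Nat.lt_or_gt_of_ne fun h => hne (ZMod.val_injective n h) with h | h
  · exact (rootPoint_lt_rootPoint hp h).ne hij
  · exact (rootPoint_lt_rootPoint hp h).ne' hij

lemma prod_rootPoint (g : ℚ → ℚ) :
    ∏ i : ZMod n, g (rootPoint p i) = g p * ∏ k ∈ Finset.range (n - 1), g k := by
  obtain ⟨m, rfl⟩ : ∃ m, n = m + 1 := Nat.exists_eq_add_one.mpr (NeZero.pos n)
  rw [← Fintype.prod_equiv (ZMod.finEquiv (m + 1)).toEquiv _ (fun i => g (rootPoint p i))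
      fun _ => rfl,
    Fin.prod_univ_castSucc, Nat.add_sub_cancel, ← Fin.prod_univ_eq_prod_range, mul_comm]
  congr 1
  · exact congrArg g (if_neg (lt_irrefl _))
  · exact Fintype.prod_congr _ _ fun i => congrArg g (if_pos (Nat.succ_lt_succ i.isLt))

lemma consecutiveCrossRatio_rootPoint_of_lt {i : ZMod n} (hi : i.val + 4 < n) :
    consecutiveCrossRatio (rootPoint p) i = 1 / 4 := by
  have hx : ∀ t : ℕ, t ≤ 3 → rootPoint p (i + (t : ZMod n)) = i.val + t := fun t ht => by
    have : i + (t : ZMod n) = ((i.val + t : ℕ) : ZMod n) := by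
      rw [Nat.cast_add, ZMod.natCast_zmod_val]
    rw [this, rootPoint_natCast (by omega), Nat.cast_add]
  have h0 := hx 0 (by norm_num)
  have h1 := hx 1 (by norm_num)
  have h2 := hx 2 (by norm_num)
  have h3 := hx 3 (by norm_num)
  push_cast at h0 h1 h2 h3
  rw [add_zero] at h0
  rw [consecutiveCrossRatio, h0, h1, h2, h3, crossRatio]
  norm_num

lemma consecutiveCrossRatio_rootPoint_neg (hn : 5 ≤ n) :
    consecutiveCrossRatio (rootPoint p) (-4 : ZMod n) =
      crossRatio ((n : ℚ) - 4) (n - 3) (n - 2) p ∧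
    consecutiveCrossRatio (rootPoint p) (-3 : ZMod n) = crossRatio ((n : ℚ) - 3) (n - 2) p 0 ∧
    consecutiveCrossRatio (rootPoint p) (-2 : ZMod n) = crossRatio ((n : ℚ) - 2) p 0 1 ∧
    consecutiveCrossRatio (rootPoint p) (-1 : ZMod n) = crossRatio (p : ℚ) 0 1 2 := by
  have x0 := rootPoint_natCast (p := p) (n := n) (k := 0) (by omega)
  have x1 := rootPoint_natCast (p := p) (n := n) (k := 1) (by omega)
  have x2 := rootPoint_natCast (p := p) (n := n) (k := 2) (by omega)
  have x2' := rootPoint_neg_natCast (p := p) (n := n) (k := 2) le_rfl (by omega)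
  have x3 := rootPoint_neg_natCast (p := p) (n := n) (k := 3) (by norm_num) (by omega)
  have x4 := rootPoint_neg_natCast (p := p) (n := n) (k := 4) (by norm_num) (by omega)
  push_cast at x0 x1 x2 x2' x3 x4
  norm_num [consecutiveCrossRatio, x0, x1, x2, x4, x3, x2', rootPoint_neg_one]

/-- Cleared of denominators, the windows `k = 1, 4` would give `p = -1` and `p = n - 1`, the window
`k = 2` gives `p (6 - n) = 3 (n - 2)`, i.e. `n = 5, p = 9`, and `k = 3` gives
`p (n - 6) = (n - 3) (n - 2)`; a prime `p ≥ n` satisfies neither. -/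
lemma consecutiveCrossRatio_rootPoint_neg_ne (hn : 5 ≤ n) (hp : p.Prime) (hpn : n ≤ p) {k : ℕ}
    (hk1 : 1 ≤ k) (hk4 : k ≤ 4) :
    consecutiveCrossRatio (rootPoint p) (-(k : ZMod n)) ≠ 1 / 4 := by
  obtain ⟨c4, c3, c2, c1⟩ := consecutiveCrossRatio_rootPoint_neg (p := p) hn
  have hpQ : (n : ℚ) ≤ p := by exact_mod_cast hpn
  have hnQ : (5 : ℚ) ≤ n := by exact_mod_cast hn
  interval_cases k <;> simp only [Nat.cast_one, Nat.cast_ofNat, c1, c2, c3, c4, crossRatio] <;>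
    intro h <;> rw [div_eq_div_iff (mul_ne_zero (by intro h0; linarith) (by intro h0; linarith))
      (by norm_num)] at h
  · linarith
  · rcases (by omega : n = 5 ∨ 6 ≤ n) with rfl | h6
    · have : p = 9 := by exact_mod_cast (by norm_num at h; linarith : (p : ℚ) = 9)
      subst this
      norm_num at hp
    · have : (6 : ℚ) ≤ n := by exact_mod_cast h6
      nlinarith
  · have hZ : (p : ℤ) * (n - 6) = (n - 3) * (n - 2) := by
      have : (p : ℚ) * (n - 6) = (n - 3) * (n - 2) := by linarith
      exact_mod_cast this
    rcases (Nat.prime_iff_prime_int.mp hp).dvd_or_dvd ⟨_, hZ.symm⟩ with hd | hd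
    · have := Int.le_of_dvd (by omega) hd; omega
    · have := Int.le_of_dvd (by omega) hd; omega
  · linarith

lemma consecutiveCrossRatio_rootPoint_neg_one_ne (hn : 5 ≤ n) (hpn : n ≤ p) :
    consecutiveCrossRatio (rootPoint p) (-1 : ZMod n) ≠
      consecutiveCrossRatio (rootPoint p) (-4 : ZMod n) := by
  obtain ⟨c4, -, -, c1⟩ := consecutiveCrossRatio_rootPoint_neg (p := p) hn
  have hpQ : (n : ℚ) ≤ p := by exact_mod_cast hpn
  have hnQ : (5 : ℚ) ≤ n := by exact_mod_cast hn
  rw [c1, c4, crossRatio, crossRatio]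
  intro h
  rw [div_eq_div_iff (mul_ne_zero (by intro h0; linarith) (by norm_num))
    (mul_ne_zero (by intro h0; linarith) (by intro h0; linarith))] at h
  nlinarith

lemma consecutiveCrossRatio_rootPoint_eq_quarter_iff (hn : 5 ≤ n) (hp : p.Prime) (hpn : n ≤ p)
    (i : ZMod n) : consecutiveCrossRatio (rootPoint p) i = 1 / 4 ↔ i.val < n - 4 := by
  refine ⟨fun h => ?_, fun hi => consecutiveCrossRatio_rootPoint_of_lt (by omega)⟩
  by_contra hi
  have hval := ZMod.val_lt i
  have : i = -((n - i.val : ℕ) : ZMod n) := by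
    rw [Nat.cast_sub hval.le, ZMod.natCast_self, zero_sub, neg_neg, ZMod.natCast_zmod_val]
  exact consecutiveCrossRatio_rootPoint_neg_ne hn hp hpn (by omega) (by omega) (this ▸ h)

end RootPoint

lemma mobius_rootPoint_perm_eq_self {p n : ℕ} (hn : 5 ≤ n) (hp : p.Prime) (hpn : n ≤ p)
    {M : Matrix (Fin 2) (Fin 2) ℚ} (hdet : M.det ≠ 0) {σ : ZMod n → ZMod n}
    (hbij : Function.Bijective σ) (hden : ∀ i : ZMod n, M 1 0 * rootPoint p i + M 1 1 ≠ 0)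
    (hσ : ∀ i, mobius M (rootPoint p i) = rootPoint p (σ i)) (i : ZMod n) : σ i = i := by
  have : NeZero n := ⟨by omega⟩
  have hx : CyclicallyOrdered (rootPoint p : ZMod n → ℚ) :=
    cyclicallyOrdered_of_lt fun i j => rootPoint_lt_rootPoint (by omega)
  have hlevel := consecutiveCrossRatio_rootPoint_eq_quarter_iff hn hp hpn
  rcases hdet.lt_or_gt with hneg | hpos
  · have hrefl := hx.eq_sub_of_mobius hbij hneg hden hσ
    have hm : ((n - 4 : ℕ) : ZMod n) = -4 := by
      rw [Nat.cast_sub (by omega), ZMod.natCast_self, zero_sub, Nat.cast_ofNat]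
    refine absurd ?_ (consecutiveCrossRatio_rootPoint_neg_one_ne hn hpn)
    rw [apply_neg_one_eq_of_forall_sub_eq (by omega) (by omega) hlevel
      (consecutiveCrossRatio_sub_of_mobius hdet hden hσ hrefl), hm]
  · have hrot := hx.eq_add_of_mobius hbij hpos hden hσ
    rw [hrot i, eq_zero_of_forall_add_eq (by omega) (by omega) hlevel
      (consecutiveCrossRatio_add_of_mobius hdet hden hσ hrot), zero_add]

lemma eq_smul_one_of_prod_rootPoint_eq {p n : ℕ} [NeZero n] (hn : 5 ≤ n) (hp : p.Prime)
    (hpn : n ≤ p) {M : Matrix (Fin 2) (Fin 2) ℚ} (hdet : M.det ≠ 0)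
    (h : ∀ X Y : ℚ,
      ∏ i : ZMod n, ((M 0 0 * X + M 0 1 * Y) - rootPoint p i * (M 1 0 * X + M 1 1 * Y)) =
        ∏ i : ZMod n, (X - rootPoint p i * Y)) :
    M = M 0 0 • 1 := by
  choose hden σ hσ using mobius_mem_of_prod_eq hdet h
  have hbij : Function.Bijective σ := Finite.injective_iff_bijective.mp fun i j hij =>
    rootPoint_injective (by omega) (eq_of_mobius_eq hdet (hden i) (hden j) (by rw [hσ, hσ, hij]))
  have hfix (k : ℕ) (hk : k + 1 < n) : M 1 0 * k + M 1 1 ≠ 0 ∧ mobius M k = k := by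
    rw [← rootPoint_natCast (p := p) hk, hσ,
      mobius_rootPoint_perm_eq_self hn hp hpn hdet hbij hden hσ]
    exact ⟨hden _, rfl⟩
  obtain ⟨d0, f0⟩ := hfix 0 (by omega)
  obtain ⟨d1, f1⟩ := hfix 1 (by omega)
  obtain ⟨d2, f2⟩ := hfix 2 (by omega)
  push_cast at d0 f0 d1 f1 d2 f2
  exact eq_smul_one_of_mobius_eq_self (by norm_num) (by norm_num) (by norm_num) d0 d1 d2 f0 f1 f2

/-- For d ≥ 5 and a prime p ≥ d, the only γ ∈ GL(2,ℚ) with L∘γ = L, where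
L(X,Y) = (X − pY)·∏_{n=0}^{d−2}(X − nY), is the identity when d is odd, and ±Id
when d is even. -/
theorem stmt_16 (d : ℕ) (hd : 5 ≤ d) (p : ℕ) (hp : p.Prime) (hpd : d ≤ p)
    (M : Matrix (Fin 2) (Fin 2) ℚ) (hdet : M.det ≠ 0)
    (h : ∀ x y : ℚ,
      ((M 0 0 * x + M 0 1 * y) - (p : ℚ) * (M 1 0 * x + M 1 1 * y)) *
          ∏ n ∈ Finset.range (d - 1),
            ((M 0 0 * x + M 0 1 * y) - (n : ℚ) * (M 1 0 * x + M 1 1 * y)) =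
        (x - (p : ℚ) * y) * ∏ n ∈ Finset.range (d - 1), (x - (n : ℚ) * y)) :
    (Odd d → M = 1) ∧ (Even d → (M = 1 ∨ M = -1)) := by
  have : NeZero d := ⟨by omega⟩
  have hM : M = M 0 0 • 1 := eq_smul_one_of_prod_rootPoint_eq hd hp hpd hdet fun X Y => by
    rw [prod_rootPoint fun s => (M 0 0 * X + M 0 1 * Y) - s * (M 1 0 * X + M 1 1 * Y),
      prod_rootPoint fun s => X - s * Y]
    exact h X Y
  have ha : M 0 0 ^ d = 1 := by
    have h10 := h 1 0
    rw [hM] at h10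
    simp only [Matrix.smul_apply, Matrix.one_apply_eq, Matrix.one_apply_ne, smul_eq_mul, mul_one,
      mul_zero, add_zero, sub_zero, ne_eq, zero_ne_one, one_ne_zero, not_false_eq_true,
      Finset.prod_const, Finset.card_range, one_pow] at h10
    rwa [← pow_succ', Nat.sub_add_cancel (by omega)] at h10
  rcases (pow_eq_one_iff_of_ne_zero (by omega)).mp ha with h1 | ⟨hm1, heven⟩
  · rw [h1, one_smul] at hM
    exact ⟨fun _ => hM, fun _ => Or.inl hM⟩
  · rw [hm1, neg_one_smul] at hM
    exact ⟨fun hodd => absurd heven (Nat.not_even_iff_odd.mpr hodd), fun _ => Or.inr hM⟩
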